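/- arXiv:1301.2931 — 3 statements merged into one kernel-verified Lean document; each statement's English description precedes it below -/
import Mathlib

section
/- For n ≥ 1, if x and y are vertices of the hypercube Q_n whose Hamming distance is odd, then there exists a Hamiltonian path of Q_n from x to y. -/
/-!
Call the parity of a vertex the parity of its number of `true` coordinates. Every edge flips it,
so vertices at odd distance have opposite parities, and it suffices to join any two vertices
`x`, `y` of opposite parities by a Hamiltonian path. Split `Q (n + 1)` along a coordinate `i` with
`x i ≠ y i` into two copies of `Q n`. Deleting coordinate `i` from `x` and `y` leaves vertices
`x'`, `y'` of equal parity; choose `w` of the other parity. By induction there are Hamiltonian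
paths `x' ⟶ w` and `w ⟶ y'` in `Q n`; run the first in the layer of `x`, cross the edge at `w`,
and run the second in the layer of `y`.
-/

/-- The `n`-dimensional hypercube: vertices are functions `Fin n → Bool`,
adjacent iff they differ in exactly one coordinate. -/
def Q (n : ℕ) : SimpleGraph (Fin n → Bool) where
  Adj x y := ∃! i, x i ≠ y i
  symm := by
    constructor
    rintro x y ⟨i, hi, hu⟩
    exact ⟨i, hi.symm, fun j hj => hu j hj.symm⟩
  loopless := by
    constructor
    rintro x ⟨i, hi, -⟩
    exact hi rfl

/-- `M` is a matching (pairwise vertex-disjoint set of edges) of the graph `G`. -/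
def IsMatchingOf {V : Type*} (G : SimpleGraph V) (M : Finset (Sym2 V)) : Prop :=
  (M : Set (Sym2 V)) ⊆ G.edgeSet ∧
    (M : Set (Sym2 V)).Pairwise fun e f => ∀ v, v ∈ e → v ∉ f

/-- The edge `e` is `j`-dimensional: its endpoints differ exactly in coordinate `j`. -/
def DimEdge (n : ℕ) (j : Fin n) (e : Sym2 (Fin n → Bool)) : Prop :=
  ∃ x y, e = s(x, y) ∧ x j ≠ y j ∧ ∀ i, i ≠ j → x i = y i

/-- The distance between two edges: minimum distance between their endpoints. -/
noncomputable def edgeDist (n : ℕ) (e f : Sym2 (Fin n → Bool)) : ℕ :=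
  sInf {d | ∃ u v, u ∈ e ∧ v ∈ f ∧ d = (Q n).dist u v}

open SimpleGraph Fin

namespace Q

variable {n : ℕ}

def parity (x : Fin n → Bool) : ZMod 2 := ∑ i, if x i then 1 else 0

lemma parity_insertNth (i : Fin (n + 1)) (b : Bool) (u : Fin n → Bool) :
    parity (insertNth i b u) = (if b then 1 else 0) + parity u := by
  simp [parity, Fin.sum_univ_succAbove _ i]

lemma parity_eq_add_parity_removeNth (i : Fin (n + 1)) (x : Fin (n + 1) → Bool) :
    parity x = (if x i then 1 else 0) + parity (removeNth i x) := by
  rw [← parity_insertNth, insertNth_self_removeNth]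

lemma adj_insertNth_of_adj (i : Fin (n + 1)) (b : Bool) {u v : Fin n → Bool}
    (h : (Q n).Adj u v) : (Q (n + 1)).Adj (insertNth i b u) (insertNth i b v) := by
  obtain ⟨k, hk, huniq⟩ := h
  refine ⟨i.succAbove k, by simpa using hk, fun j hj => ?_⟩
  obtain rfl | ⟨j, rfl⟩ := eq_self_or_eq_succAbove i j
  · simp at hj
  · simp only [insertNth_apply_succAbove] at hj
    rw [huniq j hj]

lemma adj_insertNth_of_ne (i : Fin (n + 1)) {b c : Bool} (hbc : b ≠ c) (u : Fin n → Bool) :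
    (Q (n + 1)).Adj (insertNth i b u) (insertNth i c u) := by
  refine ⟨i, by simpa using hbc, fun j hj => ?_⟩
  obtain rfl | ⟨j, rfl⟩ := eq_self_or_eq_succAbove i j
  · rfl
  · simp at hj

lemma exists_adj (x : Fin (n + 1) → Bool) : ∃ w, (Q (n + 1)).Adj x w := by
  have h := adj_insertNth_of_ne 0 (Bool.not_ne_self (x 0)).symm (removeNth 0 x)
  rw [insertNth_self_removeNth (α := fun _ => Bool)] at h
  exact ⟨_, h⟩

abbrev insertNthHom (i : Fin (n + 1)) (b : Bool) : Q n →g Q (n + 1) where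
  toFun := insertNth (α := fun _ => Bool) i b
  map_rel' := adj_insertNth_of_adj i b

lemma coe_insertNthHom (i : Fin (n + 1)) (b : Bool) :
    ⇑(insertNthHom i b) = insertNth (α := fun _ => Bool) i b :=
  rfl

lemma parity_eq_add_one_of_adj {x y : Fin n → Bool} (h : (Q n).Adj x y) :
    parity y = parity x + 1 := by
  cases n with
  | zero => exact (h.exists.choose).elim0
  | succ n =>
    obtain ⟨i, hi, huniq⟩ := h
    have hrem : removeNth i x = removeNth i y := funext fun k => by
      by_contra hk
      exact succAbove_ne i k (huniq _ hk)
    rw [parity_eq_add_parity_removeNth i x, parity_eq_add_parity_removeNth i y, hrem]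
    generalize parity (removeNth i y) = p
    revert hi p
    cases x i <;> cases y i <;> decide

lemma parity_add_length {x y : Fin n → Bool} (p : (Q n).Walk x y) :
    parity x + p.length = parity y := by
  induction p with
  | nil => simp
  | cons h p ih =>
    rw [Walk.length_cons, ← ih, parity_eq_add_one_of_adj h]
    push_cast
    ring

lemma parity_ne_of_odd_dist {x y : Fin n → Bool} (h : Odd ((Q n).dist x y)) :
    parity x ≠ parity y := by
  obtain ⟨p, hp⟩ := exists_walk_of_dist_ne_zero h.pos.ne'
  rw [← parity_add_length p, hp, h.natCast_zmod_two]
  simp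

lemma count_map_insertNth (i : Fin (n + 1)) (b : Bool) (l : List (Fin n → Bool))
    (v : Fin (n + 1) → Bool) :
    (l.map (insertNth (α := fun _ => Bool) i b)).count v =
      if v i = b then l.count (removeNth i v) else 0 := by
  split_ifs with hv
  · have hv' : v = insertNth i b (removeNth i v) := by rw [← hv, insertNth_self_removeNth]
    conv_lhs => rw [hv']
    exact List.count_map_of_injective _ _ (insertNth_right_injective (α := fun _ => Bool) b) _
  · rw [List.count_eq_zero]
    simp only [List.mem_map, not_exists, not_and]
    rintro u - rfl
    exact hv (insertNth_apply_same (α := fun _ => Bool) i b u)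

lemma exists_isHamiltonian_of_layers (i : Fin (n + 1)) {b c : Bool} (hbc : b ≠ c)
    {x w y : Fin n → Bool} {P : (Q n).Walk x w} {R : (Q n).Walk w y}
    (hP : P.IsHamiltonian) (hR : R.IsHamiltonian) :
    ∃ p : (Q (n + 1)).Walk (insertNth i b x) (insertNth i c y), p.IsHamiltonian := by
  refine ⟨(P.map (insertNthHom i b)).append
    (.cons (adj_insertNth_of_ne i hbc w) (R.map (insertNthHom i c))), fun v => ?_⟩
  simp only [Walk.support_append, Walk.support_cons, List.tail_cons, Walk.support_map,
    coe_insertNthHom, List.count_append, count_map_insertNth, hP _, hR _]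
  cases hb : v i <;> cases b <;> cases c <;> simp_all

theorem exists_isHamiltonian_of_parity_ne {x y : Fin n → Bool} (h : parity x ≠ parity y) :
    ∃ p : (Q n).Walk x y, p.IsHamiltonian := by
  induction n with
  | zero => exact absurd (congrArg parity (Subsingleton.elim x y)) h
  | succ n ih =>
    obtain ⟨i, hi⟩ : ∃ i, x i ≠ y i := by
      by_contra! hxy
      exact h (congrArg parity (funext hxy))
    have hxy : parity (removeNth i x) = parity (removeNth i y) := by
      rw [parity_eq_add_parity_removeNth i x, parity_eq_add_parity_removeNth i y] at h
      revert h hi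
      generalize parity (removeNth i x) = p
      generalize parity (removeNth i y) = q
      cases x i <;> cases y i <;> revert p q <;> decide
    obtain ⟨w, P, R, hP, hR⟩ : ∃ (w : Fin n → Bool) (P : (Q n).Walk (removeNth i x) w)
        (R : (Q n).Walk w (removeNth i y)), P.IsHamiltonian ∧ R.IsHamiltonian := by
      cases n with
      | zero =>
        exact ⟨_, .nil, Walk.nil.copy rfl (Subsingleton.elim _ _), .of_subsingleton,
          .of_subsingleton⟩
      | succ n =>
        obtain ⟨w, hw⟩ := exists_adj (removeNth i x)
        have hpw := parity_eq_add_one_of_adj hw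
        obtain ⟨P, hP⟩ := ih (x := removeNth i x) (y := w) (by simp [hpw])
        obtain ⟨R, hR⟩ := ih (x := w) (y := removeNth i y) (by simp [hpw, hxy])
        exact ⟨w, P, R, hP, hR⟩
    have hp := exists_isHamiltonian_of_layers i hi hP hR
    rwa [insertNth_self_removeNth, insertNth_self_removeNth] at hp

end Q

theorem stmt_2_general (n : ℕ) (x y : Fin n → Bool)
    (h : Odd ((Q n).dist x y)) :
    ∃ p : (Q n).Walk x y, p.IsHamiltonian :=
  Q.exists_isHamiltonian_of_parity_ne (Q.parity_ne_of_odd_dist h)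

theorem stmt_2 (n : ℕ) (hn : 1 ≤ n) (x y : Fin n → Bool)
    (h : Odd ((Q n).dist x y)) :
    ∃ p : (Q n).Walk x y, p.IsHamiltonian :=
  stmt_2_general n x y h
end

section
/- For n ≥ 2, let x and y be vertices of Q_n at odd Hamming distance and let e be an edge of Q_n with e ≠ xy. Then there exists a Hamiltonian path of Q_n from x to y that passes through the edge e. -/
namespace SimpleGraph

open Walk

variable {V : Type*} {G : SimpleGraph V}

lemma Walk.IsPath.exists_end_edge_ne {x y : V} {p : G.Walk x y} (hp : p.IsPath)
    (hlen : 2 ≤ p.length) (e : Sym2 V) :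
    (∃ (v : V) (h : G.Adj x v) (q : G.Walk v y), p = cons h q ∧ e ≠ s(x, v)) ∨
      (∃ (v : V) (h : G.Adj y v) (q : G.Walk v x), p.reverse = cons h q ∧ e ≠ s(y, v)) := by
  obtain ⟨v', h', q', hq'⟩ := not_nil_iff.mp
    (not_nil_iff_lt_length.mpr (by rw [length_reverse]; omega) : ¬p.reverse.Nil)
  obtain ⟨v, h, q, rfl⟩ := not_nil_iff.mp (not_nil_iff_lt_length.mpr (by omega) : ¬p.Nil)
  by_cases hv : e = s(x, v)
  · by_cases hv' : e = s(y, v')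
    · exfalso
      rcases Sym2.eq_iff.mp (hv.symm.trans hv') with ⟨rfl, -⟩ | ⟨-, rfl⟩
      · exact not_nil_cons (isPath_iff_nil.mp hp)
      · obtain rfl := (isPath_iff_nil.mp hp.of_cons).eq_nil
        simp at hlen
    · exact Or.inr ⟨v', h', q', hq', hv'⟩
  · exact Or.inl ⟨v, h, q, rfl, hv⟩

variable [DecidableEq V]

variable (G) in
def HamPathThrough (x y : V) (e : Sym2 V) : Prop :=
  ∃ p : G.Walk x y, p.IsHamiltonian ∧ e ∈ p.edges

lemma Walk.IsHamiltonian.reverse {x y : V} {p : G.Walk x y} (hp : p.IsHamiltonian) :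
    p.reverse.IsHamiltonian := by
  intro v
  rw [support_reverse, List.count_reverse]
  exact hp v

lemma HamPathThrough.symm {x y : V} {e : Sym2 V} (h : HamPathThrough G x y e) :
    HamPathThrough G y x e := by
  obtain ⟨p, hp, he⟩ := h
  exact ⟨p.reverse, hp.reverse, by rwa [edges_reverse, List.mem_reverse]⟩

end SimpleGraph

namespace Hypercube

open SimpleGraph Walk

section Toggle

variable {n : ℕ}

def toggle (j : Fin n) (v : Fin n → Bool) : Fin n → Bool := Function.update v j (!v j)

@[simp] lemma toggle_apply_self (j : Fin n) (v : Fin n → Bool) : toggle j v j = !v j := by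
  simp [toggle]

@[simp] lemma toggle_apply_of_ne {i j : Fin n} (h : i ≠ j) (v : Fin n → Bool) :
    toggle j v i = v i := by
  simp [toggle, h]

lemma toggle_left_injective (v : Fin n → Bool) : Function.Injective (toggle · v) := by
  intro i j h
  by_contra hij
  simpa [hij] using congrFun h i

lemma adj_iff_exists_eq_toggle {x y : Fin n → Bool} : (Q n).Adj x y ↔ ∃ j, y = toggle j x := by
  constructor
  · rintro ⟨j, hj, huniq⟩
    refine ⟨j, funext fun i => ?_⟩
    by_cases hij : i = j
    · subst hij
      simpa using (Bool.eq_not_of_ne hj).symm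
    · simpa [hij] using (not_not.mp (mt (huniq i) hij)).symm
  · rintro ⟨j, rfl⟩
    refine ⟨j, by simp, fun i hi => ?_⟩
    by_contra hij
    exact hi (by simp [hij])

lemma adj_toggle (j : Fin n) (v : Fin n → Bool) : (Q n).Adj v (toggle j v) :=
  adj_iff_exists_eq_toggle.mpr ⟨j, rfl⟩

lemma exists_eq_toggle_of_mem_edgeSet {e : Sym2 (Fin n → Bool)} (he : e ∈ (Q n).edgeSet) :
    ∃ a j, e = s(a, toggle j a) := by
  induction e with
  | _ a b =>
    obtain ⟨j, rfl⟩ := adj_iff_exists_eq_toggle.mp ((Q n).mem_edgeSet.mp he)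
    exact ⟨a, j, rfl⟩

lemma toggle_succAbove_insertNth {m : ℕ} (k : Fin (m + 1)) (j : Fin m) (b : Bool)
    (v : Fin m → Bool) :
    toggle (k.succAbove j) (k.insertNth b v) = k.insertNth b (toggle j v) := by
  ext i
  induction i using k.succAboveCases with
  | x => simp
  | p i =>
    rcases eq_or_ne i j with rfl | hij
    · simp
    · simp [hij, Fin.succAbove_right_injective.ne hij]

lemma toggle_insertNth {m : ℕ} (k : Fin (m + 1)) (b : Bool) (v : Fin m → Bool) :
    toggle k (k.insertNth b v) = k.insertNth (!b) v := by
  simp [toggle]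

end Toggle

section Parity

variable {n : ℕ}

def parity (v : Fin n → Bool) : ZMod 2 := ∑ i, ((v i).toNat : ZMod 2)

lemma parity_insertNth {m : ℕ} (k : Fin (m + 1)) (b : Bool) (v : Fin m → Bool) :
    parity (k.insertNth b v) = b.toNat + parity v := by
  simp [parity, Fin.sum_univ_succAbove _ k]

lemma parity_toggle (j : Fin n) (v : Fin n → Bool) : parity (toggle j v) = parity v + 1 := by
  cases n with
  | zero => exact j.elim0
  | succ m =>
    obtain ⟨b, u, rfl⟩ : ∃ b u, v = j.insertNth b u := ⟨_, _, (j.insertNth_self_removeNth v).symm⟩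
    have hnot : ((!b).toNat : ZMod 2) = b.toNat + 1 := by cases b <;> decide
    rw [toggle_insertNth, parity_insertNth, parity_insertNth, hnot, add_right_comm]

lemma parity_of_adj {x y : Fin n → Bool} (h : (Q n).Adj x y) : parity y = parity x + 1 := by
  obtain ⟨j, rfl⟩ := adj_iff_exists_eq_toggle.mp h
  exact parity_toggle j x

lemma parity_ne_of_adj {x y : Fin n → Bool} (h : (Q n).Adj x y) : parity x ≠ parity y := by
  simp [parity_of_adj h]

lemma cast_length_eq_parity_sub {x y : Fin n → Bool} (p : (Q n).Walk x y) :
    (p.length : ZMod 2) = parity y - parity x := by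
  induction p with
  | nil => simp
  | cons h p ih =>
    rw [length_cons, Nat.cast_succ, ih, parity_of_adj h]
    ring

lemma parity_ne_of_odd_dist {x y : Fin n → Bool} (h : Odd ((Q n).dist x y)) :
    parity x ≠ parity y := by
  obtain ⟨p, hp⟩ := exists_walk_of_dist_ne_zero h.pos.ne'
  have : parity y - parity x = 1 := by
    rw [← cast_length_eq_parity_sub p, hp, ZMod.natCast_eq_one_iff_odd]
    exact h
  intro hxy
  simp [hxy] at this

end Parity

section Facet

variable {m : ℕ} (k : Fin (m + 1))

lemma eq_of_ne_of_ne {a b c : Bool} (hab : a ≠ b) (hbc : b ≠ c) : a = c := by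
  decide +revert

def facetHom (b : Bool) : Q m →g Q (m + 1) where
  toFun v := k.insertNth b v
  map_rel' {u v} h := by
    obtain ⟨j, rfl⟩ := adj_iff_exists_eq_toggle.mp h
    simpa [toggle_succAbove_insertNth] using adj_toggle (k.succAbove j) (k.insertNth b u)

lemma facetHom_apply (b : Bool) (v : Fin m → Bool) : facetHom k b v = k.insertNth b v := rfl

lemma parity_facetHom (b : Bool) (v : Fin m → Bool) :
    parity (facetHom k b v) = b.toNat + parity v :=
  parity_insertNth k b v

lemma parity_eq_of_parity_facetHom_ne {b c : Bool} (hbc : b ≠ c) {u v : Fin m → Bool}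
    (h : parity (facetHom k b u) ≠ parity (facetHom k c v)) : parity u = parity v := by
  rw [parity_facetHom, parity_facetHom] at h
  generalize parity u = p, parity v = q at h ⊢
  revert b c p q
  decide

lemma facetHom_inj {b c : Bool} {u v : Fin m → Bool} :
    facetHom k b u = facetHom k c v ↔ b = c ∧ u = v :=
  Fin.insertNth_inj (α := fun _ => Bool)

lemma adj_facetHom_of_ne {b c : Bool} (hbc : b ≠ c) (v : Fin m → Bool) :
    (Q (m + 1)).Adj (facetHom k b v) (facetHom k c v) := by
  simpa [facetHom_apply, toggle_insertNth, Bool.eq_not_of_ne hbc.symm] using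
    adj_toggle k (k.insertNth b v)

lemma facetHom_injective (b : Bool) : Function.Injective (facetHom k b) :=
  fun _ _ h => ((facetHom_inj k).mp h).2

lemma exists_eq_facetHom (v : Fin (m + 1) → Bool) : ∃ d u, v = facetHom k d u :=
  ⟨v k, k.removeNth v, (k.insertNth_self_removeNth v).symm⟩

lemma exists_eq_map_facetHom {j : Fin (m + 1)} (hjk : j ≠ k) (a : Fin (m + 1) → Bool) :
    ∃ (c : Bool) (e : Sym2 (Fin m → Bool)), e ∈ (Q m).edgeSet ∧
      s(a, toggle j a) = e.map (facetHom k c) := by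
  obtain ⟨j, rfl⟩ := Fin.exists_succAbove_eq hjk
  refine ⟨a k, s(k.removeNth a, toggle j (k.removeNth a)), adj_toggle _ _, ?_⟩
  simp [facetHom_apply, ← toggle_succAbove_insertNth]

lemma count_map_facetHom (b d : Bool) (l : List (Fin m → Bool)) (u : Fin m → Bool) :
    (l.map (facetHom k b)).count (facetHom k d u) = if d = b then l.count u else 0 := by
  split_ifs with hdb
  · subst hdb
    exact List.count_map_of_injective _ _ (facetHom_injective k d) u
  · refine List.count_eq_zero.mpr fun hmem => ?_
    obtain ⟨_, -, heq⟩ := List.mem_map.mp hmem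
    exact hdb ((facetHom_inj k).mp heq).1.symm

lemma count_map_facetHom_append {b c : Bool} (hbc : b ≠ c) (l l' : List (Fin m → Bool))
    (d : Bool) (u : Fin m → Bool) :
    (l.map (facetHom k b) ++ l'.map (facetHom k c)).count (facetHom k d u) =
      if d = b then l.count u else l'.count u := by
  rw [List.count_append, count_map_facetHom, count_map_facetHom]
  rcases eq_or_ne d b with rfl | hdb
  · simp [hbc]
  · obtain rfl : d = c := eq_of_ne_of_ne hdb hbc
    simp [hdb]

variable {b c : Bool} (hbc : b ≠ c) {x w y : Fin m → Bool}

def join (P : (Q m).Walk x w) (H : (Q m).Walk w y) :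
    (Q (m + 1)).Walk (facetHom k b x) (facetHom k c y) :=
  (P.map (facetHom k b)).append (cons (adj_facetHom_of_ne k hbc w) (H.map (facetHom k c)))

variable (P : (Q m).Walk x w) (H : (Q m).Walk w y)

lemma support_join :
    (join k hbc P H).support = P.support.map (facetHom k b) ++ H.support.map (facetHom k c) := by
  simp only [join, support_append, support_cons, List.tail_cons, Walk.support_map]

lemma map_mem_edges_join_left {f : Sym2 (Fin m → Bool)} (hf : f ∈ P.edges) :
    f.map (facetHom k b) ∈ (join k hbc P H).edges := by
  rw [join, edges_append, edges_map]
  exact List.mem_append_left _ (List.mem_map_of_mem hf)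

lemma map_mem_edges_join_right {f : Sym2 (Fin m → Bool)} (hf : f ∈ H.edges) :
    f.map (facetHom k c) ∈ (join k hbc P H).edges := by
  simp only [join, edges_append, edges_cons, edges_map]
  exact List.mem_append_right _ (List.mem_cons_of_mem _ (List.mem_map_of_mem hf))

lemma isHamiltonian_join (hP : P.IsHamiltonian) (hH : H.IsHamiltonian) :
    (join k hbc P H).IsHamiltonian := by
  intro v
  obtain ⟨d, u, rfl⟩ := exists_eq_facetHom k v
  rw [support_join, count_map_facetHom_append k hbc]
  split_ifs
  exacts [hP u, hH u]

lemma isHamiltonian_cons_join {v : Fin m → Bool} (h : (Q m).Adj x v) {P : (Q m).Walk v y}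
    (hP : (cons h P).IsHamiltonian) {H : (Q m).Walk x v} (hH : H.IsHamiltonian) :
    (cons (adj_facetHom_of_ne k hbc x) (join k hbc.symm H P)).IsHamiltonian := by
  intro v
  obtain ⟨d, u, rfl⟩ := exists_eq_facetHom k v
  have hPu := hP u
  simp only [support_cons, List.count_cons, beq_iff_eq] at hPu
  simp only [support_cons, List.count_cons, support_join, count_map_facetHom_append k hbc.symm,
    beq_iff_eq, facetHom_inj]
  rcases eq_or_ne d b with rfl | hdb
  · simpa [hbc] using hPu
  · obtain rfl : d = c := eq_of_ne_of_ne hdb hbc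
    simp [hbc, hH u]

end Facet

section Laceable

variable {n m : ℕ}

lemma exists_adj_ne (hn : 2 ≤ n) (x : Fin n → Bool) (e : Sym2 (Fin n → Bool)) :
    ∃ w, (Q n).Adj x w ∧ e ≠ s(x, w) := by
  let i₀ : Fin n := ⟨0, by omega⟩
  let i₁ : Fin n := ⟨1, by omega⟩
  by_cases he : e = s(x, toggle i₀ x)
  · refine ⟨toggle i₁ x, adj_toggle i₁ x, fun h => ?_⟩
    have : i₀ = i₁ := toggle_left_injective x (Sym2.congr_right.mp (he.symm.trans h))
    simp [i₀, i₁, Fin.ext_iff] at this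
  · exact ⟨toggle i₀ x, adj_toggle i₀ x, he⟩

lemma two_le_length_of_isHamiltonian (hn : 2 ≤ n) {x y : Fin n → Bool} {p : (Q n).Walk x y}
    (hp : p.IsHamiltonian) : 2 ≤ p.length := by
  have : 2 ^ 2 ≤ 2 ^ n := Nat.pow_le_pow_right (by norm_num) hn
  rw [hp.length_eq, Fintype.card_fun, Fintype.card_bool, Fintype.card_fin]
  omega

def Laceable (n : ℕ) : Prop :=
  ∀ x y : Fin n → Bool, parity x ≠ parity y → ∃ p : (Q n).Walk x y, p.IsHamiltonian

def EdgeLaceable (n : ℕ) : Prop :=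
  ∀ x y : Fin n → Bool, parity x ≠ parity y → ∀ e ∈ (Q n).edgeSet, e ≠ s(x, y) →
    (Q n).HamPathThrough x y e

lemma EdgeLaceable.laceable (hn : 2 ≤ n) (h : EdgeLaceable n) : Laceable n := by
  intro x y hxy
  obtain ⟨w, hw, hne⟩ := exists_adj_ne hn x s(x, y)
  obtain ⟨p, hp, -⟩ := h x y hxy _ hw hne.symm
  exact ⟨p, hp⟩

variable (k : Fin (m + 1)) {x y : Fin m → Bool} {b c : Bool} {e : Sym2 (Fin m → Bool)}

lemma hamPathThrough_of_cons (hE : EdgeLaceable m) (hL : Laceable m) {v : Fin m → Bool}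
    (h : (Q m).Adj x v) {P : (Q m).Walk v y} (hP : (cons h P).IsHamiltonian)
    (he : e ∈ (Q m).edgeSet) (hev : e ≠ s(x, v)) (hmem : c = b → e ∈ P.edges) :
    (Q (m + 1)).HamPathThrough (facetHom k b x) (facetHom k b y) (e.map (facetHom k c)) := by
  rcases eq_or_ne c b with rfl | hcb
  · obtain ⟨H, hH⟩ := hL x v (parity_ne_of_adj h)
    exact ⟨_, isHamiltonian_cons_join k (Bool.self_ne_not c) h hP hH,
      List.mem_cons_of_mem _ (map_mem_edges_join_right k _ H P (hmem rfl))⟩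
  · obtain ⟨H, hH, heH⟩ := hE x v (parity_ne_of_adj h) e he hev
    exact ⟨_, isHamiltonian_cons_join k hcb.symm h hP hH,
      List.mem_cons_of_mem _ (map_mem_edges_join_left k _ H P heH)⟩

lemma hamPathThrough_sameFacet (hm : 2 ≤ m) (hE : EdgeLaceable m) (hL : Laceable m)
    (hxy : parity x ≠ parity y) (he : e ∈ (Q m).edgeSet) (hne : c = b → e ≠ s(x, y)) :
    (Q (m + 1)).HamPathThrough (facetHom k b x) (facetHom k b y) (e.map (facetHom k c)) := by
  obtain ⟨P, hP, hmem⟩ : ∃ P : (Q m).Walk x y, P.IsHamiltonian ∧ (c = b → e ∈ P.edges) := by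
    by_cases hcb : c = b
    · obtain ⟨P, hP, heP⟩ := hE x y hxy e he (hne hcb)
      exact ⟨P, hP, fun _ => heP⟩
    · obtain ⟨P, hP⟩ := hL x y hxy
      exact ⟨P, hP, fun h => absurd h hcb⟩
  rcases hP.isPath.exists_end_edge_ne (two_le_length_of_isHamiltonian hm hP) e with
    ⟨v, h, q, rfl, hev⟩ | ⟨v, h, q, hq, hev⟩
  · refine hamPathThrough_of_cons k hE hL h hP he hev fun hcb => ?_
    exact (List.mem_cons.mp (hmem hcb)).resolve_left hev
  · refine (hamPathThrough_of_cons k hE hL h (hq ▸ hP.reverse) he hev fun hcb => ?_).symm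
    have : e ∈ P.reverse.edges := by rw [edges_reverse, List.mem_reverse]; exact hmem hcb
    rw [hq, edges_cons] at this
    exact (List.mem_cons.mp this).resolve_left hev

lemma hamPathThrough_crossFacet (hm : 2 ≤ m) (hE : EdgeLaceable m) (hL : Laceable m)
    (hbc : b ≠ c) (hxy : parity x = parity y) (he : e ∈ (Q m).edgeSet) :
    (Q (m + 1)).HamPathThrough (facetHom k b x) (facetHom k c y) (e.map (facetHom k b)) := by
  obtain ⟨w, hw, hne⟩ := exists_adj_ne hm x e
  obtain ⟨P, hP, heP⟩ := hE x w (parity_ne_of_adj hw) e he hne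
  obtain ⟨H, hH⟩ := hL w y (by simp [parity_of_adj hw, hxy])
  exact ⟨join k hbc P H, isHamiltonian_join k hbc P H hP hH, map_mem_edges_join_left k hbc P H heP⟩

lemma EdgeLaceable.succ (hm : 2 ≤ m) (hE : EdgeLaceable m) : EdgeLaceable (m + 1) := by
  have hL := hE.laceable hm
  intro x y hxy e he hne
  obtain ⟨a, j, rfl⟩ := exists_eq_toggle_of_mem_edgeSet he
  -- split along a coordinate `k` other than the direction of `e`, so that `e` lies in a facet
  have : Nontrivial (Fin (m + 1)) := Fin.nontrivial_iff_two_le.mpr (by omega)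
  obtain ⟨k, hjk⟩ := exists_ne j
  obtain ⟨c, e, he, heq⟩ := exists_eq_map_facetHom k hjk.symm a
  rw [heq] at hne ⊢
  obtain ⟨b, x, rfl⟩ := exists_eq_facetHom k x
  obtain ⟨b', y, rfl⟩ := exists_eq_facetHom k y
  rcases eq_or_ne b b' with rfl | hbb'
  · have hpar : parity x ≠ parity y := fun h => hxy (by rw [parity_facetHom, parity_facetHom, h])
    refine hamPathThrough_sameFacet k hm hE hL hpar he ?_
    rintro rfl rfl
    exact hne (Sym2.map_mk _ _ _)
  · have hpar := parity_eq_of_parity_facetHom_ne k hbb' hxy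
    rcases eq_or_ne c b with rfl | hcb
    · exact hamPathThrough_crossFacet k hm hE hL hbb' hpar he
    · obtain rfl : c = b' := eq_of_ne_of_ne hcb hbb'
      exact (hamPathThrough_crossFacet k hm hE hL hbb'.symm hpar.symm he).symm

end Laceable

lemma edgeLaceable_two : EdgeLaceable 2 := by
  have hadj : ∀ x y : Fin 2 → Bool, parity x ≠ parity y → ∃ j, y = toggle j x := by decide
  have hend : ∀ (x : Fin 2 → Bool) (j : Fin 2),
      toggle j.rev (toggle j (toggle j.rev x)) = toggle j x := by decide
  have hsupport : ∀ (x v : Fin 2 → Bool) (j : Fin 2),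
      [x, toggle j.rev x, toggle j (toggle j.rev x), toggle j.rev (toggle j (toggle j.rev x))].count
        v = 1 := by decide
  have hedges : ∀ (x a : Fin 2 → Bool) (i j : Fin 2), s(a, toggle i a) ≠ s(x, toggle j x) →
      s(a, toggle i a) ∈ [s(x, toggle j.rev x), s(toggle j.rev x, toggle j (toggle j.rev x)),
        s(toggle j (toggle j.rev x), toggle j.rev (toggle j (toggle j.rev x)))] := by decide
  intro x y hxy e he hne
  obtain ⟨j, rfl⟩ := hadj x y hxy
  -- `Q 2` is a 4-cycle: go around it the long way
  obtain ⟨a, i, rfl⟩ := exists_eq_toggle_of_mem_edgeSet he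
  let p : (Q 2).Walk x (toggle j x) :=
    (cons (adj_toggle j.rev x) (cons (adj_toggle j _) (cons (adj_toggle j.rev _) nil))).copy rfl
      (hend x j)
  refine ⟨p, fun v => ?_, ?_⟩
  · simpa only [p, support_copy, support_cons, support_nil] using hsupport x v j
  · simpa only [p, edges_copy, edges_cons, edges_nil] using hedges x a i j hne

lemma edgeLaceable {n : ℕ} (hn : 2 ≤ n) : EdgeLaceable n := by
  induction n, hn using Nat.le_induction with
  | base => exact edgeLaceable_two
  | succ m hm ih => exact ih.succ hm

end Hypercube

theorem stmt_3 (n : ℕ) (hn : 2 ≤ n) (x y : Fin n → Bool)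
    (h : Odd ((Q n).dist x y)) (e : Sym2 (Fin n → Bool))
    (he : e ∈ (Q n).edgeSet) (hne : e ≠ s(x, y)) :
    ∃ p : (Q n).Walk x y, p.IsHamiltonian ∧ e ∈ p.edges :=
  Hypercube.edgeLaceable hn x y (Hypercube.parity_ne_of_odd_dist h) e he hne
end

section
/- For every n ≥ 2 and every perfect matching M of the complete graph K(Q_n) on the vertex set of Q_n, there exists a perfect matching R of Q_n such that M ∪ R forms a Hamiltonian cycle of K(Q_n). -/
open Function SimpleGraph

variable {V W : Type*}

def matchingUnion (μ ρ : V → V) : SimpleGraph V :=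
  SimpleGraph.fromRel fun x y => y = μ x ∨ y = ρ x

section MatchingUnion

variable {μ ρ : V → V}

theorem matchingUnion_reachable_left (x : V) : (matchingUnion μ ρ).Reachable x (μ x) := by
  by_cases h : x = μ x
  · rw [← h]
  · exact Adj.reachable ⟨h, .inl (.inl rfl)⟩

theorem matchingUnion_reachable_right (x : V) : (matchingUnion μ ρ).Reachable x (ρ x) := by
  by_cases h : x = ρ x
  · rw [← h]
  · exact Adj.reachable ⟨h, .inl (.inr rfl)⟩

theorem SimpleGraph.Reachable.rel_of_matchingUnion {r : W → W → Prop} (hr : Equivalence r)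
    {f : V → W} (hμ : ∀ x, r (f x) (f (μ x))) (hρ : ∀ x, r (f x) (f (ρ x))) {u v : V}
    (h : (matchingUnion μ ρ).Reachable u v) : r (f u) (f v) := by
  rw [reachable_iff_reflTransGen] at h
  induction h with
  | refl => exact hr.refl _
  | tail _ hxy ih =>
    obtain ⟨-, (rfl | rfl) | (rfl | rfl)⟩ := hxy
    exacts [hr.trans ih (hμ _), hr.trans ih (hρ _), hr.trans ih (hr.symm (hμ _)),
      hr.trans ih (hr.symm (hρ _))]

theorem matchingUnion_reachable_iterate (i : ℕ) (x : V) :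
    (matchingUnion μ ρ).Reachable x ((μ ∘ ρ)^[i] x) := by
  induction i with
  | zero => rfl
  | succ i ih =>
    rw [iterate_succ_apply']
    exact (ih.trans (matchingUnion_reachable_right _)).trans (matchingUnion_reachable_left _)

theorem matchingUnion_adj (hμ : Involutive μ) (hρ : Involutive ρ) (hμ' : ∀ x, μ x ≠ x)
    (hρ' : ∀ x, ρ x ≠ x) {x y : V} : (matchingUnion μ ρ).Adj x y ↔ y = μ x ∨ y = ρ x := by
  simp only [matchingUnion, fromRel_adj]
  constructor
  · rintro ⟨-, h | rfl | rfl⟩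
    · exact h
    · exact .inl (hμ y).symm
    · exact .inr (hρ y).symm
  · rintro (rfl | rfl)
    · exact ⟨(hμ' x).symm, .inl (.inl rfl)⟩
    · exact ⟨(hρ' x).symm, .inl (.inr rfl)⟩

theorem isCycles_matchingUnion (hμ : Involutive μ) (hρ : Involutive ρ) (hμ' : ∀ x, μ x ≠ x)
    (hρ' : ∀ x, ρ x ≠ x) (hne : ∀ x, ρ x ≠ μ x) : (matchingUnion μ ρ).IsCycles := by
  intro x _
  have : (matchingUnion μ ρ).neighborSet x = {μ x, ρ x} := by
    ext y
    simp [matchingUnion_adj hμ hρ hμ' hρ']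
  rw [this, Set.ncard_pair (hne x).symm]

theorem exists_isHamiltonianCycle_matchingUnion [Fintype V] [DecidableEq V] [Nonempty V]
    (hμ : Involutive μ) (hρ : Involutive ρ) (hμ' : ∀ x, μ x ≠ x) (hρ' : ∀ x, ρ x ≠ x)
    (hne : ∀ x, ρ x ≠ μ x) (hconn : (matchingUnion μ ρ).Preconnected) :
    ∃ (a : V) (c : (⊤ : SimpleGraph V).Walk a a),
      c.IsHamiltonianCycle ∧ ∀ e, e ∈ c.edges ↔ e ∈ (matchingUnion μ ρ).edgeSet := by
  classical
  obtain ⟨v⟩ := ‹Nonempty V›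
  have hcyc := isCycles_matchingUnion hμ hρ hμ' hρ' hne
  obtain ⟨p, hp, hverts⟩ := hcyc.exists_cycle_toSubgraph_verts_eq_connectedComponentSupp
    (c := (matchingUnion μ ρ).connectedComponentMk v) rfl
    ⟨μ v, (matchingUnion_adj hμ hρ hμ' hρ').2 (.inl rfl)⟩
  have hsupp : ∀ w, w ∈ p.support := fun w => by
    rw [← Walk.mem_verts_toSubgraph, hverts, ConnectedComponent.mem_supp_iff,
      ConnectedComponent.eq]
    exact hconn w v
  refine ⟨v, p.mapLe le_top, ?_, fun e => ?_⟩
  · rw [Walk.isHamiltonianCycle_iff_isCycle_and_support_count_tail_eq_one,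
      Walk.support_mapLe_eq_support]
    refine ⟨hp.mapLe le_top, fun w => List.count_eq_one_of_mem hp.support_nodup ?_⟩
    rcases p.mem_support_iff.1 (hsupp w) with rfl | h
    · exact Walk.end_mem_tail_support hp.not_nil
    · exact h
  · rw [Walk.edges_mapLe_eq_edges, ← Walk.mem_edges_toSubgraph]
    induction e using Sym2.ind with
    | _ x y =>
      rw [Subgraph.mem_edgeSet, mem_edgeSet]
      exact hp.adj_toSubgraph_iff_of_isCycles hcyc (p.mem_verts_toSubgraph.2 (hsupp x)) y

end MatchingUnion

section AlternatingPath

variable {f g : W → W}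

theorem iterate_comp_apply_iterate (hf : Involutive f) (hg : Involutive g) (i : ℕ) (x : W) :
    (f ∘ g)^[i] (g ((f ∘ g)^[i] x)) = g x := by
  induction i generalizing x with
  | zero => rfl
  | succ i ih =>
    rw [iterate_succ_apply, iterate_succ_apply', comp_apply, comp_apply, hg, hf]
    exact ih x

theorem exists_alternatingPath_endpoint [Finite W] (hf : Involutive f) (hf' : ∀ x, f x ≠ x)
    (hg : Involutive g) :
    ∃ E : W → W, ∀ b, IsFixedPt g b → IsFixedPt g (E b) ∧ E b ≠ b ∧ E (E b) = b ∧
      (IsFixedPt g (f b) → E b = f b) ∧ (matchingUnion f g).Reachable b (E b) := by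
  -- `E b` is the first return of `b` to the fixed points of `g` under `σ`. As `g` conjugates `σ`
  -- to `σ⁻¹`, iterating `σ` from `E b` retraces the same path back to `b`.
  set σ := f ∘ g
  let k : W → ℕ := fun b => sInf {i | 0 < i ∧ IsFixedPt g (σ^[i] b)}
  have hk : ∀ b, IsFixedPt g b → 0 < k b ∧ IsFixedPt g (σ^[k b] b) := fun b hb =>
    Nat.sInf_mem (s := {i | 0 < i ∧ IsFixedPt g (σ^[i] b)}) ⟨minimalPeriod σ b,
      minimalPeriod_pos_of_mem_periodicPts ((hf.injective.comp hg.injective).mem_periodicPts b),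
      by rwa [iterate_minimalPeriod]⟩
  have hmin : ∀ b i, 0 < i → i < k b → ¬IsFixedPt g (σ^[i] b) := fun b i hi hik h =>
    Nat.notMem_of_lt_sInf hik ⟨hi, h⟩
  have hreflect : ∀ b, IsFixedPt g b → ∀ j ≤ k b, σ^[j] (σ^[k b] b) = g (σ^[k b - j] b) := by
    intro b hb j hj
    have hsplit : σ^[k b] b = σ^[j] (σ^[k b - j] b) := by
      rw [← iterate_add_apply, Nat.add_sub_cancel' hj]
    calc σ^[j] (σ^[k b] b) = σ^[j] (g (σ^[k b] b)) := by rw [(hk b hb).2]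
      _ = g (σ^[k b - j] b) := by rw [hsplit]; exact iterate_comp_apply_iterate hf hg j _
  refine ⟨fun b => σ^[k b] b, fun b hb =>
    ⟨(hk b hb).2, fun (hfix : σ^[k b] b = b) => ?_, ?_, fun hfb => ?_,
      matchingUnion_reachable_iterate _ b⟩⟩
  · have hpos := (hk b hb).1
    obtain ⟨j, hj | hj⟩ := Nat.even_or_odd' (k b)
    · have h := hreflect b hb j (by omega)
      rw [hfix, show k b - j = j by omega] at h
      exact hmin b j (by omega) (by omega) h.symm
    · have h := hreflect b hb (j + 1) (by omega)
      rw [hfix, show k b - (j + 1) = j by omega, iterate_succ_apply'] at h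
      exact hf' _ h
  · have hkE : k (σ^[k b] b) = k b := by
      refine le_antisymm (Nat.sInf_le ⟨(hk b hb).1, ?_⟩) (not_lt.1 fun hlt => ?_)
      · rw [IsFixedPt, hreflect b hb _ le_rfl, Nat.sub_self, iterate_zero_apply, hb, hb]
      · obtain ⟨hposE, h⟩ := hk _ (hk b hb).2
        rw [IsFixedPt, hreflect b hb _ hlt.le] at h
        refine hmin b (k b - k (σ^[k b] b)) (by omega) (by omega) ?_
        have h' := congrArg g h
        rwa [hg, hg] at h'
    simp only [hkE]
    rw [hreflect b hb _ le_rfl, Nat.sub_self, iterate_zero_apply, hb]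
  · have hk1 : k b = 1 := le_antisymm (Nat.sInf_le ⟨one_pos, by simpa [σ, hb.eq]⟩) (hk b hb).1
    simp only [hk1, iterate_one, σ, comp_apply, hb.eq]

end AlternatingPath

structure IsHamiltonianPartner (G : SimpleGraph V) (μ ρ : V → V) : Prop where
  involutive : Involutive ρ
  adj : ∀ x, G.Adj x (ρ x)
  ne : ∀ x, ρ x ≠ μ x
  preconnected : (matchingUnion μ ρ).Preconnected

/-- The pairing-Hamiltonian property of Alahmadi et al.; a pairing of `V` (a perfect matching of
the complete graph on `V`) is encoded as a fixed-point-free involution. -/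
def IsPairingHamiltonian (G : SimpleGraph V) : Prop :=
  ∀ μ : V → V, Involutive μ → (∀ x, μ x ≠ x) → ∃ ρ, IsHamiltonianPartner G μ ρ

theorem IsHamiltonianPartner.map {G : SimpleGraph V} {G' : SimpleGraph W} {μ ρ : V → V}
    (e : G ≃g G') (h : IsHamiltonianPartner G μ ρ) :
    IsHamiltonianPartner G' (e ∘ μ ∘ e.symm) (e ∘ ρ ∘ e.symm) where
  involutive x := by simp [h.involutive _]
  adj x := by simpa using e.map_adj_iff.2 (h.adj (e.symm x))
  ne x hx := h.ne (e.symm x) (e.injective hx)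
  preconnected u v := by
    set H := matchingUnion (e ∘ μ ∘ e.symm) (e ∘ ρ ∘ e.symm)
    have hμ x : H.Reachable (e x) (e (μ x)) := by
      convert matchingUnion_reachable_left (e x) using 1
      simp
    have hρ x : H.Reachable (e x) (e (ρ x)) := by
      convert matchingUnion_reachable_right (e x) using 1
      simp
    simpa using (h.preconnected (e.symm u) (e.symm v)).rel_of_matchingUnion
      (reachable_is_equivalence _) hμ hρ

def fiberwise (φ : Bool → V → V) (w : Bool × V) : Bool × V :=
  (w.1, φ w.1 w.2)

section BoxProduct

variable {m : Bool × V → Bool × V}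

/-- `m'` pairs `x` with the other end of the path from `(b, x)` that alternates between `m` and
`φ` on the other half. -/
theorem exists_induced_matching [Finite V] (hm : Involutive m) (hm' : ∀ w, m w ≠ w) (b : Bool)
    {φ : V → V} (hφ : Involutive φ) (hφ' : ∀ x, φ x ≠ x) :
    ∃ m' : V → V, Involutive m' ∧ (∀ x, m' x ≠ x) ∧
      (∀ x, (m (b, x)).1 = b → m (b, x) = (b, m' x)) ∧
      ∀ x, (matchingUnion m (fiberwise fun c => if c = b then id else φ)).Reachable
        (b, x) (b, m' x) := by
  set g := fiberwise fun c => if c = b then id else φ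
  have hg : Involutive g := by
    rintro ⟨c, x⟩
    by_cases h : c = b <;> simp [g, fiberwise, h, hφ x]
  have hfix : ∀ w, IsFixedPt g w ↔ w.1 = b := by
    rintro ⟨c, x⟩
    by_cases h : c = b <;> simp [g, fiberwise, IsFixedPt, h, hφ' x]
  obtain ⟨E, hE⟩ := exists_alternatingPath_endpoint hm hm' hg
  have hE' := fun x => hE (b, x) ((hfix _).2 rfl)
  have hEb : ∀ x, E (b, x) = (b, (E (b, x)).2) := fun x =>
    Prod.ext ((hfix _).1 (hE' x).1) rfl
  refine ⟨fun x => (E (b, x)).2, fun x => ?_,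
    fun x hx => (hE' x).2.1 ((hEb x).trans (congrArg (Prod.mk b) hx)),
    fun x hx => ((hE' x).2.2.2.1 ((hfix _).2 hx)).symm.trans (hEb x), fun x => ?_⟩
  · show (E (b, (E (b, x)).2)).2 = x
    rw [← hEb, (hE' x).2.2.1]
  · rw [← hEb]
    exact (hE' x).2.2.2.2

theorem reachable_true_of_induced {ρ₀ ρ₁ m₁ : V → V}
    (hm₁ : ∀ x, (matchingUnion m (fiberwise fun c => if c = true then id else ρ₀)).Reachable
      (true, x) (true, m₁ x))
    (hconn : (matchingUnion m₁ ρ₁).Preconnected) (x y : V) :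
    (matchingUnion m (fiberwise fun c => if c then ρ₁ else ρ₀)).Reachable (true, x) (true, y) := by
  refine (hconn x y).rel_of_matchingUnion (reachable_is_equivalence _) (f := fun z => (true, z))
    (fun z => ?_) (fun z => matchingUnion_reachable_right (true, z))
  refine (hm₁ z).rel_of_matchingUnion (reachable_is_equivalence _) (f := id)
    matchingUnion_reachable_left ?_
  rintro ⟨_ | _, w⟩
  · exact matchingUnion_reachable_right (false, w)
  · rfl

theorem exists_reachable_true_of_induced (hm : Involutive m) (hcross : ∃ w, (m w).1 ≠ w.1)
    {ρ₀ ρ₁ m₀ : V → V} (hm₀ : Involutive m₀)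
    (hm₀m : ∀ x, (m (false, x)).1 = false → m (false, x) = (false, m₀ x))
    (hconn : (matchingUnion m₀ ρ₀).Preconnected) (x : V) :
    ∃ y, (matchingUnion m (fiberwise fun c => if c then ρ₁ else ρ₀)).Reachable
      (false, x) (true, y) := by
  set H := matchingUnion m (fiberwise fun c => if c then ρ₁ else ρ₀)
  set P := fun x => ∃ y, H.Reachable (false, x) (true, y)
  have hcrossP : ∀ x, (m (false, x)).1 = true → P x := fun x hx =>
    ⟨(m (false, x)).2, by rw [← hx]; exact matchingUnion_reachable_left _⟩
  have hstep : ∀ x x', H.Reachable (false, x) (false, x') → (P x ↔ P x') := fun x x' h =>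
    ⟨fun ⟨y, hy⟩ => ⟨y, h.symm.trans hy⟩, fun ⟨y, hy⟩ => ⟨y, h.trans hy⟩⟩
  -- An `m₀`-edge is either an `m`-edge inside the `false` half or joins two vertices whose
  -- `m`-edges both cross.
  have hPm₀ : ∀ x, P x ↔ P (m₀ x) := by
    intro x
    cases hx : (m (false, x)).1
    · exact hstep _ _ (by rw [← hm₀m x hx]; exact matchingUnion_reachable_left _)
    · refine iff_of_true (hcrossP x hx) (hcrossP _ ?_)
      by_contra h
      have h' := congrArg (fun w => (m w).1) (hm₀m _ (by simpa using h))
      simp [hm₀ x, hm (false, m₀ x), hx] at h'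
  have hPρ₀ : ∀ x, P x ↔ P (ρ₀ x) := fun x =>
    hstep _ _ (matchingUnion_reachable_right (false, x))
  obtain ⟨a, ha⟩ : ∃ a, (m (false, a)).1 = true := by
    obtain ⟨⟨_ | _, w⟩, hw⟩ := hcross
    · exact ⟨w, by simpa using hw⟩
    · have hw' : (m (true, w)).1 = false := by simpa using hw
      exact ⟨(m (true, w)).2, by rw [← hw', Prod.mk.eta, hm]⟩
  exact ((hconn a x).rel_of_matchingUnion ⟨Iff.refl, Iff.symm, Iff.trans⟩ hPm₀ hPρ₀).1
    (hcrossP a ha)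

end BoxProduct

theorem IsPairingHamiltonian.exists_partner_boxProd [Finite V] {G : SimpleGraph V}
    (hG : IsPairingHamiltonian G) {ν : V → V} (hν : Involutive ν) (hνG : ∀ x, G.Adj x (ν x))
    {m : Bool × V → Bool × V} (hm : Involutive m) (hm' : ∀ w, m w ≠ w)
    (hcross : ∃ w, (m w).1 ≠ w.1) :
    ∃ ρ, IsHamiltonianPartner ((⊤ : SimpleGraph Bool) □ G) m ρ := by
  obtain ⟨m₀, hm₀, hm₀', hm₀m, -⟩ := exists_induced_matching hm hm' false hν fun x => (hνG x).ne'
  obtain ⟨ρ₀, hρ₀⟩ := hG m₀ hm₀ hm₀'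
  obtain ⟨m₁, hm₁, hm₁', hm₁m, hm₁r⟩ :=
    exists_induced_matching hm hm' true hρ₀.involutive fun x => (hρ₀.adj x).ne'
  obtain ⟨ρ₁, hρ₁⟩ := hG m₁ hm₁ hm₁'
  refine ⟨fiberwise fun c => if c then ρ₁ else ρ₀, ⟨?_, ?_, ?_, fun u v => ?_⟩⟩
  · rintro ⟨_ | _, x⟩ <;> simp [fiberwise, hρ₀.involutive x, hρ₁.involutive x]
  · rintro ⟨_ | _, x⟩ <;> simp [fiberwise, boxProd_adj, hρ₀.adj x, hρ₁.adj x]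
  · rintro ⟨_ | _, x⟩ h
    · rw [hm₀m x (by rw [← h]; rfl)] at h
      exact hρ₀.ne x (by simpa [fiberwise] using h)
    · rw [hm₁m x (by rw [← h]; rfl)] at h
      exact hρ₁.ne x (by simpa [fiberwise] using h)
  · have hreach : ∀ w, ∃ y, (matchingUnion m (fiberwise fun c => if c then ρ₁ else ρ₀)).Reachable
        w (true, y) := by
      rintro ⟨_ | _, x⟩
      · exact exists_reachable_true_of_induced hm hcross hm₀ hm₀m hρ₀.preconnected x
      · exact ⟨x, Reachable.refl _⟩
    obtain ⟨y, hy⟩ := hreach u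
    obtain ⟨y', hy'⟩ := hreach v
    exact hy.trans ((reachable_true_of_induced hm₁r hρ₁.preconnected y y').trans hy'.symm)

theorem isHamiltonianPartner_of_card_eq_four [Fintype V] (hV : Fintype.card V = 4)
    {G : SimpleGraph V} {μ ρ : V → V} (hμ : Involutive μ) (hμ' : ∀ x, μ x ≠ x)
    (hρ : Involutive ρ) (hρG : ∀ x, G.Adj x (ρ x)) {x₀ : V} (hx₀ : ρ x₀ ≠ μ x₀) :
    IsHamiltonianPartner G μ ρ := by
  classical
  have hρ' x : ρ x ≠ x := (hρG x).ne'
  -- `x₀, μ x₀, ρ x₀, μ (ρ x₀)` are distinct, hence all of `V`, and `μ ∪ ρ` is a 4-cycle on them.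
  have hμ₁ := hμ x₀
  have hμ₂ := hμ (ρ x₀)
  have hρ₁ := hρ x₀
  have hρ₂ := hρ (μ x₀)
  have hρ₃ := hρ (μ (ρ x₀))
  have hall : ∀ y, y = x₀ ∨ y = μ x₀ ∨ y = ρ x₀ ∨ y = μ (ρ x₀) := by
    have hcard : ({x₀, μ x₀, ρ x₀, μ (ρ x₀)} : Finset V).card = 4 := by
      have hμ₃ := hμ' (ρ x₀)
      rw [Finset.card_insert_of_notMem, Finset.card_insert_of_notMem, Finset.card_pair] <;>
        simp <;> grind
    intro y
    have hy : y ∈ ({x₀, μ x₀, ρ x₀, μ (ρ x₀)} : Finset V) := by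
      rw [Finset.eq_univ_of_card _ (hcard.trans hV.symm)]
      exact Finset.mem_univ y
    simpa using hy
  have hρμ : ρ (μ x₀) = μ (ρ x₀) := by
    have hρ₄ := hρ' (μ x₀)
    rcases hall (ρ (μ x₀)) with h | h | h | h <;> grind
  refine ⟨hρ, hρG, fun y => ?_, fun u w => ?_⟩
  · rcases hall y with rfl | rfl | rfl | rfl <;> grind
  · have hreach : ∀ y, (matchingUnion μ ρ).Reachable x₀ y := by
      intro y
      rcases hall y with rfl | rfl | rfl | rfl
      · rfl
      · exact matchingUnion_reachable_left _
      · exact matchingUnion_reachable_right _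
      · exact (matchingUnion_reachable_right _).trans (matchingUnion_reachable_left _)
    exact (hreach u).symm.trans (hreach w)

theorem Q.adj_iff_hammingDist {n : ℕ} {x y : Fin n → Bool} :
    (Q n).Adj x y ↔ hammingDist x y = 1 :=
  Fintype.existsUnique_iff_card_one _

theorem hammingDist_eq_add_removeNth {n : ℕ} (j : Fin (n + 1)) (x y : Fin (n + 1) → Bool) :
    hammingDist x y =
      (if x j ≠ y j then 1 else 0) + hammingDist (Fin.removeNth j x) (Fin.removeNth j y) := by
  simp only [hammingDist, Finset.card_filter]
  rw [Fin.sum_univ_succAbove _ j]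
  rfl

def Q.succIso {n : ℕ} (j : Fin (n + 1)) : Q (n + 1) ≃g (⊤ : SimpleGraph Bool) □ Q n where
  toEquiv := (Fin.insertNthEquiv (fun _ => Bool) j).symm
  map_rel_iff' {x y} := by
    simp only [boxProd_adj, top_adj, Q.adj_iff_hammingDist, hammingDist_eq_add_removeNth j x y,
      Fin.insertNthEquiv_symm_apply]
    by_cases h : x j = y j <;> simp [h, hammingDist_eq_zero]

@[simp]
theorem Q.succIso_apply {n : ℕ} (j : Fin (n + 1)) (x : Fin (n + 1) → Bool) :
    Q.succIso j x = (x j, Fin.removeNth j x) :=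
  rfl

def flipAt {n : ℕ} (i : Fin n) (x : Fin n → Bool) : Fin n → Bool :=
  update x i (!x i)

theorem flipAt_involutive {n : ℕ} (i : Fin n) : Involutive (flipAt i) := fun x => by
  simp [flipAt]

theorem Q.adj_flipAt {n : ℕ} (i : Fin n) (x : Fin n → Bool) : (Q n).Adj x (flipAt i x) :=
  ⟨i, by simp [flipAt], fun j hj => by_contra fun h => hj (by simp [flipAt, update_of_ne h])⟩

theorem isPairingHamiltonian_Q_two : IsPairingHamiltonian (Q 2) := by
  intro μ hμ hμ'
  obtain ⟨i, hi⟩ : ∃ i : Fin 2, flipAt i default ≠ μ default := by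
    by_contra! h
    have := congrFun ((h 0).trans (h 1).symm) 0
    simp [flipAt] at this
  exact ⟨flipAt i, isHamiltonianPartner_of_card_eq_four (by simp) hμ hμ' (flipAt_involutive i)
    (Q.adj_flipAt i) hi⟩

theorem IsPairingHamiltonian.Q_succ {n : ℕ} (hn : 0 < n) (h : IsPairingHamiltonian (Q n)) :
    IsPairingHamiltonian (Q (n + 1)) := by
  intro μ hμ hμ'
  obtain ⟨j, hj⟩ := Function.ne_iff.1 (hμ' default)
  set e := Q.succIso j
  obtain ⟨ρ, hρ⟩ := h.exists_partner_boxProd (flipAt_involutive ⟨0, hn⟩) (Q.adj_flipAt ⟨0, hn⟩)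
    (m := e ∘ μ ∘ e.symm) (fun w => by simp [hμ _])
    (fun w hw => hμ' _ (by simpa using congrArg e.symm hw)) ⟨e default, by
      simp only [comp_apply, RelIso.symm_apply_apply]
      simpa [e] using hj⟩
  refine ⟨e.symm ∘ ρ ∘ e, ?_⟩
  convert hρ.map e.symm using 1 <;> funext x <;> simp

theorem isPairingHamiltonian_Q {n : ℕ} (hn : 2 ≤ n) : IsPairingHamiltonian (Q n) := by
  induction n, hn using Nat.le_induction with
  | base => exact isPairingHamiltonian_Q_two
  | succ n hn ih => exact ih.Q_succ (by omega)

theorem exists_involutive_of_perfectMatching {G : SimpleGraph V} {M : Set (Sym2 V)}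
    (hM : M ⊆ G.edgeSet) (hpm : ∀ v, ∃! e, e ∈ M ∧ v ∈ e) :
    ∃ μ : V → V, Involutive μ ∧ (∀ x, G.Adj x (μ x)) ∧ ∀ x y, s(x, y) ∈ M ↔ y = μ x := by
  choose e he huniq using hpm
  set μ := fun v => Sym2.Mem.other (he v).2
  have hspec : ∀ v, s(v, μ v) ∈ M := fun v => by
    rw [Sym2.other_spec]
    exact (he v).1
  have hmem : ∀ x y, s(x, y) ∈ M ↔ y = μ x := fun x y =>
    ⟨fun h => Sym2.congr_right.1
      ((huniq x _ ⟨h, Sym2.mem_mk_left x y⟩).trans (Sym2.other_spec _).symm),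
    fun h => h ▸ hspec x⟩
  exact ⟨μ, fun x => ((hmem _ _).1 (Sym2.eq_swap ▸ hspec x)).symm, fun x => hM (hspec x), hmem⟩

section EdgesOfInvolution

variable [Fintype V] [DecidableEq V] {ρ : V → V}

theorem mk_mem_image_univ_iff (hρ : Involutive ρ) {x y : V} :
    s(x, y) ∈ Finset.univ.image (fun v => s(v, ρ v)) ↔ y = ρ x := by
  simp only [Finset.mem_image, Finset.mem_univ, true_and, Sym2.eq_iff]
  constructor
  · rintro ⟨v, ⟨rfl, rfl⟩ | ⟨rfl, rfl⟩⟩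
    exacts [rfl, (hρ v).symm]
  · rintro rfl
    exact ⟨x, .inl ⟨rfl, rfl⟩⟩

theorem existsUnique_mem_image_univ (hρ : Involutive ρ) (x : V) :
    ∃! e, e ∈ Finset.univ.image (fun v => s(v, ρ v)) ∧ x ∈ e := by
  refine ⟨s(x, ρ x), ⟨Finset.mem_image_of_mem _ (Finset.mem_univ x), Sym2.mem_mk_left _ _⟩, ?_⟩
  rintro e ⟨he, hx⟩
  obtain ⟨y, rfl⟩ := Sym2.mem_iff_exists.1 hx
  rw [(mk_mem_image_univ_iff hρ).1 he]

end EdgesOfInvolution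

theorem stmt_11 (n : ℕ) (hn : 2 ≤ n) (M : Finset (Sym2 (Fin n → Bool)))
    (hM : (M : Set (Sym2 (Fin n → Bool))) ⊆ (⊤ : SimpleGraph (Fin n → Bool)).edgeSet)
    (hpm : ∀ v, ∃! e, e ∈ M ∧ v ∈ e) :
    ∃ R : Finset (Sym2 (Fin n → Bool)),
      (R : Set (Sym2 (Fin n → Bool))) ⊆ (Q n).edgeSet ∧
      (∀ v, ∃! e, e ∈ R ∧ v ∈ e) ∧
      ∃ (a : Fin n → Bool) (c : (⊤ : SimpleGraph (Fin n → Bool)).Walk a a),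
        c.IsHamiltonianCycle ∧ ∀ e, e ∈ c.edges ↔ e ∈ M ∪ R := by
  obtain ⟨μ, hμ, hμM, hM⟩ := exists_involutive_of_perfectMatching hM hpm
  have hμ' x : μ x ≠ x := (hμM x).ne'
  obtain ⟨ρ, hρ⟩ := isPairingHamiltonian_Q hn μ hμ hμ'
  have hρ' x : ρ x ≠ x := (hρ.adj x).ne'
  obtain ⟨a, c, hc, hedges⟩ := exists_isHamiltonianCycle_matchingUnion hμ hρ.involutive hμ' hρ'
    hρ.ne hρ.preconnected
  refine ⟨Finset.univ.image fun v => s(v, ρ v), ?_, existsUnique_mem_image_univ hρ.involutive,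
    a, c, hc, fun e => ?_⟩
  · intro e he
    obtain ⟨v, -, rfl⟩ := Finset.mem_image.1 he
    exact hρ.adj v
  · rw [hedges]
    induction e using Sym2.ind with
    | _ x y =>
      rw [mem_edgeSet, matchingUnion_adj hμ hρ.involutive hμ' hρ', Finset.mem_union,
        ← Finset.mem_coe, hM, mk_mem_image_univ_iff hρ.involutive]
end
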